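/- Let (X, 𝔪) be a measurable space with all finite subsets in 𝔪 and X infinite, and X* the space of non-principal 𝔪-ultrafilters with the subspace topology from 𝔪^β. Then every countable union of nowhere dense subsets of X* is nowhere dense in X*. -/

import Mathlib

/-!
Suppose `U = interior (closure (⋃ n, fₙ))` contains a point; then it contains a basic set
`Â₀ ∩ X*` with `A₀` infinite. Since each `fₙ` is nowhere dense, one finds measurable infinite sets
`A₀ ⊋ A₁ ⊋ A₂ ⊋ ⋯` with `Âₙ₊₁ ∩ X*` disjoint from `closure fₙ`. Picking `yₙ ∈ Aₙ \ Aₙ₊₁` gives a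
countable, hence measurable, infinite set `B = {yₙ}` with `B \ Aₙ` finite for every `n`. A
non-principal ultrafilter containing `B` therefore contains every `Aₙ`, so the nonempty open set
`B̂ ∩ X*` lies in `closure (⋃ n, fₙ)` but misses every `fₙ`, which is impossible.
-/

open Set

def IsMFilter {X : Type*} [MeasurableSpace X] (p : Set (Set X)) : Prop :=
  (∀ A ∈ p, MeasurableSet A) ∧ ∅ ∉ p ∧ Set.univ ∈ p ∧
  (∀ A ∈ p, ∀ B : Set X, MeasurableSet B → A ⊆ B → B ∈ p) ∧
  (∀ A ∈ p, ∀ B ∈ p, A ∩ B ∈ p)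

def IsMUltrafilter {X : Type*} [MeasurableSpace X] (p : Set (Set X)) : Prop :=
  IsMFilter p ∧ ∀ q : Set (Set X), IsMFilter q → p ⊆ q → q = p

def MUltra (X : Type*) [MeasurableSpace X] : Type _ :=
  {p : Set (Set X) // IsMUltrafilter p}

def hatSet {X : Type*} [MeasurableSpace X] (A : Set X) : Set (MUltra X) :=
  {p | A ∈ p.1}

instance {X : Type*} [MeasurableSpace X] : TopologicalSpace (MUltra X) :=
  TopologicalSpace.generateFrom {U | ∃ A : Set X, MeasurableSet A ∧ U = hatSet A}

instance {X : Type*} [MeasurableSpace X] : MeasurableSpace (MUltra X) :=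
  MeasurableSpace.generateFrom {U | ∃ A : Set X, MeasurableSet A ∧ U = hatSet A}

def principalUF {X : Type*} [MeasurableSpace X] (x : X) : Set (Set X) :=
  {A | MeasurableSet A ∧ x ∈ A}

theorem principalUF_ultra {X : Type*} [MeasurableSpace X] (x : X) :
    IsMUltrafilter (principalUF x) := by
  constructor
  · refine ⟨fun A hA => hA.1, ?_, ⟨MeasurableSet.univ, trivial⟩, ?_, ?_⟩
    · intro h; exact h.2
    · intro A hA B hB hAB; exact ⟨hB, hAB hA.2⟩
    · intro A hA B hB; exact ⟨hA.1.inter hB.1, hA.2, hB.2⟩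
  · intro q hq hpq
    refine Set.Subset.antisymm ?_ hpq
    intro A hAq
    have hAm : MeasurableSet A := hq.1 A hAq
    by_contra hx
    have hxc : x ∈ Aᶜ := fun h => hx ⟨hAm, h⟩
    have hcq : Aᶜ ∈ q := hpq ⟨hAm.compl, hxc⟩
    have hint : A ∩ Aᶜ ∈ q := hq.2.2.2.2 A hAq Aᶜ hcq
    rw [Set.inter_compl_self] at hint
    exact hq.2.1 hint

def princ {X : Type*} [MeasurableSpace X] (x : X) : MUltra X :=
  ⟨principalUF x, principalUF_ultra x⟩

open Topology TopologicalSpace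

theorem exists_countable_infinite_diff_finite_of_strictAnti {α : Type*} {A : ℕ → Set α}
    (hA : StrictAnti A) :
    ∃ B : Set α, B.Countable ∧ B.Infinite ∧ B ⊆ A 0 ∧ ∀ n, (B \ A n).Finite := by
  choose y hy using fun n => exists_of_ssubset (hA (Nat.lt_succ_self n))
  have hyA : ∀ {m n}, m ≤ n → y n ∈ A m := fun hmn => hA.antitone hmn (hy _).1
  have hinj : Function.Injective y :=
    .of_lt_imp_ne fun m n hmn h => (hy m).2 (h ▸ hyA (Nat.succ_le_of_lt hmn))
  refine ⟨range y, countable_range y, infinite_range_of_injective hinj,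
    range_subset_iff.2 fun n => hyA n.zero_le, fun n => ((finite_Iio n).image y).subset ?_⟩
  rintro _ ⟨⟨k, rfl⟩, hk⟩
  exact ⟨k, lt_of_not_ge fun hnk => hk (hyA hnk), rfl⟩

theorem IsMFilter.exists_isMUltrafilter_superset {X : Type*} [MeasurableSpace X]
    {q : Set (Set X)} (hq : IsMFilter q) : ∃ p, IsMUltrafilter p ∧ q ⊆ p := by
  have hchain : ∀ c ⊆ {r : Set (Set X) | IsMFilter r}, IsChain (· ⊆ ·) c → c.Nonempty →
      ∃ ub ∈ {r : Set (Set X) | IsMFilter r}, ∀ s ∈ c, s ⊆ ub := by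
    intro c hc hchain ⟨s₀, hs₀⟩
    refine ⟨⋃₀ c, ⟨?_, ?_, ⟨s₀, hs₀, (hc hs₀).2.2.1⟩, ?_, ?_⟩, fun s hs => subset_sUnion_of_mem hs⟩
    · rintro A ⟨s, hs, hAs⟩
      exact (hc hs).1 A hAs
    · rintro ⟨s, hs, hes⟩
      exact (hc hs).2.1 hes
    · rintro A ⟨s, hs, hAs⟩ B hB hAB
      exact ⟨s, hs, (hc hs).2.2.2.1 A hAs B hB hAB⟩
    · rintro A ⟨s, hs, hAs⟩ B ⟨t, ht, hBt⟩
      rcases hchain.total hs ht with hst | hts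
      · exact ⟨t, ht, (hc ht).2.2.2.2 A (hst hAs) B hBt⟩
      · exact ⟨s, hs, (hc hs).2.2.2.2 A hAs B (hts hBt)⟩
  obtain ⟨m, hqm, hm, hmax⟩ := zorn_subset_nonempty _ hchain q hq
  exact ⟨m, ⟨hm, fun r hr hmr => (hmax hr hmr).antisymm hmr⟩, hqm⟩

namespace MUltra

variable {X : Type*} [MeasurableSpace X] (p : MUltra X) {A B : Set X}

theorem measurableSet_of_mem (hA : A ∈ p.1) : MeasurableSet A := p.2.1.1 A hA

theorem empty_notMem : ∅ ∉ p.1 := p.2.1.2.1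

theorem mem_of_superset (hA : A ∈ p.1) (hB : MeasurableSet B) (hAB : A ⊆ B) : B ∈ p.1 :=
  p.2.1.2.2.2.1 A hA B hB hAB

theorem inter_mem (hA : A ∈ p.1) (hB : B ∈ p.1) : A ∩ B ∈ p.1 := p.2.1.2.2.2.2 A hA B hB

theorem nonempty_of_mem (hA : A ∈ p.1) : A.Nonempty :=
  nonempty_iff_ne_empty.2 fun h => p.empty_notMem (h ▸ hA)

/-- If `A` meets every member of `p`, then the sets containing some `A ∩ C` with `C ∈ p` form an
`𝔪`-filter extending `p`, which by maximality is `p` itself. -/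
theorem mem_or_compl_mem (hA : MeasurableSet A) : A ∈ p.1 ∨ Aᶜ ∈ p.1 := by
  by_cases hmeet : ∀ C ∈ p.1, (A ∩ C).Nonempty
  · left
    let q : Set (Set X) := {B | MeasurableSet B ∧ ∃ C ∈ p.1, A ∩ C ⊆ B}
    have hq : IsMFilter q := by
      refine ⟨fun B hB => hB.1, ?_, ⟨.univ, univ, p.2.1.2.2.1, subset_univ _⟩, ?_, ?_⟩
      · rintro ⟨-, C, hC, hsub⟩
        exact (hmeet C hC).ne_empty (subset_empty_iff.1 hsub)
      · rintro B ⟨-, C, hC, hsub⟩ D hD hBD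
        exact ⟨hD, C, hC, hsub.trans hBD⟩
      · rintro B ⟨hB, C, hC, hsub⟩ B' ⟨hB', C', hC', hsub'⟩
        exact ⟨hB.inter hB', C ∩ C', p.inter_mem hC hC',
          fun x hx => ⟨hsub ⟨hx.1, hx.2.1⟩, hsub' ⟨hx.1, hx.2.2⟩⟩⟩
    have hpq : p.1 ⊆ q := fun C hC => ⟨p.measurableSet_of_mem hC, C, hC, inter_subset_right⟩
    rw [← p.2.2 q hq hpq]
    exact ⟨hA, univ, p.2.1.2.2.1, inter_subset_left⟩
  · push Not at hmeet
    obtain ⟨C, hC, hAC⟩ := hmeet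
    exact .inr <| p.mem_of_superset hC hA.compl fun x hxC hxA =>
      (hAC ▸ ⟨hxA, hxC⟩ : x ∈ (∅ : Set X))

theorem eq_princ_of_singleton_mem {x : X} (hx : {x} ∈ p.1) : p = princ x := by
  refine Subtype.ext
    (p.2.2 _ (principalUF_ultra x).1 fun A hA => ⟨p.measurableSet_of_mem hA, ?_⟩).symm
  obtain ⟨y, hyA, rfl⟩ := p.nonempty_of_mem (p.inter_mem hA hx)
  exact hyA

variable [MeasurableSingletonClass X] {p}

theorem compl_singleton_mem (hp : p ∉ range princ) (x : X) : {x}ᶜ ∈ p.1 :=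
  (p.mem_or_compl_mem (measurableSet_singleton x)).resolve_left
    fun hx => hp ⟨x, (p.eq_princ_of_singleton_mem hx).symm⟩

theorem infinite_of_mem (hp : p ∉ range princ) (hA : A ∈ p.1) : A.Infinite := by
  intro hfin
  induction A, hfin using Set.Finite.induction_on with
  | empty => exact p.empty_notMem hA
  | @insert a s _ hs ih =>
    refine ih (p.mem_of_superset (p.inter_mem hA (compl_singleton_mem hp a)) hs.measurableSet ?_)
    rintro y ⟨rfl | hy, hya⟩
    exacts [absurd rfl hya, hy]

theorem mem_of_diff_finite (hp : p ∉ range princ) (hA : A ∈ p.1) (hB : MeasurableSet B)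
    (hAB : (A \ B).Finite) : B ∈ p.1 := by
  refine (p.mem_or_compl_mem hAB.measurableSet).elim
    (fun h => absurd hAB (infinite_of_mem hp h)) fun h => p.mem_of_superset (p.inter_mem hA h) hB ?_
  rintro x ⟨hxA, hx⟩
  by_contra hxB
  exact hx ⟨hxA, hxB⟩

theorem exists_notMem_range_princ_mem (hA : MeasurableSet A) (hAinf : A.Infinite) :
    ∃ p : MUltra X, p ∉ range princ ∧ A ∈ p.1 := by
  have hq : IsMFilter {B : Set X | MeasurableSet B ∧ (A \ B).Finite} := by
    refine ⟨fun B hB => hB.1, fun h => hAinf (by simpa using h.2), ⟨.univ, by simp⟩, ?_, ?_⟩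
    · rintro B ⟨-, hB⟩ C hC hBC
      exact ⟨hC, hB.subset (sdiff_subset_sdiff_right hBC)⟩
    · rintro B ⟨hBm, hB⟩ C ⟨hCm, hC⟩
      exact ⟨hBm.inter hCm, by simpa [sdiff_inter] using hB.union hC⟩
  obtain ⟨p, hp, hqp⟩ := hq.exists_isMUltrafilter_superset
  refine ⟨⟨p, hp⟩, ?_, hqp ⟨hA, by simp⟩⟩
  rintro ⟨x, hx⟩
  have hxc : {x}ᶜ ∈ p :=
    hqp ⟨(measurableSet_singleton x).compl, (finite_singleton x).subset (by simp)⟩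
  rw [← show principalUF x = p from congrArg Subtype.val hx] at hxc
  exact hxc.2 rfl

end MUltra

theorem hatSet_subset_hatSet {X : Type*} [MeasurableSpace X] {A B : Set X}
    (hB : MeasurableSet B) (hAB : A ⊆ B) : hatSet A ⊆ hatSet B :=
  fun p hp => p.mem_of_superset hp hB hAB

theorem isTopologicalBasis_hatSet {X : Type*} [MeasurableSpace X] :
    IsTopologicalBasis {U : Set (MUltra X) | ∃ A, MeasurableSet A ∧ U = hatSet A} := by
  refine ⟨?_, ?_, rfl⟩
  · rintro _ ⟨A, hA, rfl⟩ _ ⟨B, hB, rfl⟩ p hp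
    refine ⟨hatSet (A ∩ B), ⟨A ∩ B, hA.inter hB, rfl⟩, p.inter_mem hp.1 hp.2, fun q hq => ?_⟩
    exact ⟨q.mem_of_superset hq hA inter_subset_left, q.mem_of_superset hq hB inter_subset_right⟩
  · exact sUnion_eq_univ_iff.2 fun p => ⟨hatSet univ, ⟨univ, .univ, rfl⟩, p.2.1.2.2.1⟩

/-- The space `X*` of non-principal `𝔪`-ultrafilters. -/
abbrev Remainder (X : Type*) [MeasurableSpace X] : Type _ :=
  ↥((range (princ : X → MUltra X))ᶜ)

namespace Remainder

variable {X : Type*} [MeasurableSpace X] {A B : Set X}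

theorem exists_hatSet_subset {U : Set (Remainder X)} (hU : IsOpen U) {q : Remainder X}
    (hq : q ∈ U) : ∃ A, MeasurableSet A ∧ A ∈ q.1.1 ∧ (↑) ⁻¹' hatSet A ⊆ U := by
  obtain ⟨_, ⟨_, ⟨A, hA, rfl⟩, rfl⟩, hqA, hAU⟩ :=
    (isTopologicalBasis_hatSet.isInducing IsInducing.subtypeVal).exists_subset_of_mem_open hq hU
  exact ⟨A, hA, hqA, hAU⟩

theorem isOpen_preimage_hatSet (hA : MeasurableSet A) :
    IsOpen ((↑) ⁻¹' hatSet A : Set (Remainder X)) :=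
  (isTopologicalBasis_hatSet.isOpen ⟨A, hA, rfl⟩).preimage continuous_subtype_val

variable [MeasurableSingletonClass X]

theorem infinite_of_mem (q : Remainder X) (hA : A ∈ q.1.1) : A.Infinite :=
  MUltra.infinite_of_mem q.2 hA

theorem preimage_hatSet_nonempty (hA : MeasurableSet A) (hAinf : A.Infinite) :
    ((↑) ⁻¹' hatSet A : Set (Remainder X)).Nonempty :=
  let ⟨p, hp, hAp⟩ := MUltra.exists_notMem_range_princ_mem hA hAinf
  ⟨⟨p, hp⟩, hAp⟩

theorem preimage_hatSet_subset_of_diff_finite (hB : MeasurableSet B) (hAB : (A \ B).Finite) :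
    ((↑) ⁻¹' hatSet A : Set (Remainder X)) ⊆ (↑) ⁻¹' hatSet B :=
  fun q hq => MUltra.mem_of_diff_finite q.2 hq hB hAB

/-- The nonempty open set `Â ∩ X*` is not inside `closure s`; a basic neighbourhood `Ĉ ∩ X*` of
a point outside gives `D = (A ∩ C) \ {a}`, with `a` removed only to make the inclusion strict. -/
theorem exists_ssubset_disjoint_closure {s : Set (Remainder X)} (hs : IsNowhereDense s)
    (hA : MeasurableSet A) (hAinf : A.Infinite) :
    ∃ D, MeasurableSet D ∧ D.Infinite ∧ D ⊂ A ∧ Disjoint ((↑) ⁻¹' hatSet D) (closure s) := by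
  have hAs : ¬ (↑) ⁻¹' hatSet A ⊆ closure s := fun h =>
    (preimage_hatSet_nonempty hA hAinf).ne_empty <|
      subset_empty_iff.1 (hs ▸ interior_maximal h (isOpen_preimage_hatSet hA))
  obtain ⟨q, hqA, hqs⟩ := not_subset.1 hAs
  obtain ⟨C, hC, hqC, hCs⟩ := exists_hatSet_subset isClosed_closure.isOpen_compl hqs
  have hAC : (A ∩ C).Infinite := q.infinite_of_mem (q.1.inter_mem hqA hqC)
  obtain ⟨a, ha⟩ := hAC.nonempty
  refine ⟨(A ∩ C) \ {a}, (hA.inter hC).diff (measurableSet_singleton a),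
    hAC.sdiff (finite_singleton a),
    (ssubset_iff_of_subset fun x hx => hx.1.1).2 ⟨a, ha.1, fun h => h.2 rfl⟩, ?_⟩
  exact subset_compl_iff_disjoint_right.1
    ((preimage_mono (hatSet_subset_hatSet hC fun x hx => hx.1.2)).trans hCs)

theorem exists_strictAnti_disjoint_closure {s : ℕ → Set (Remainder X)}
    (hs : ∀ n, IsNowhereDense (s n)) (hA : MeasurableSet A) (hAinf : A.Infinite) :
    ∃ D : ℕ → Set X, StrictAnti D ∧ D 0 = A ∧ (∀ n, MeasurableSet (D n)) ∧
      ∀ n, Disjoint ((↑) ⁻¹' hatSet (D (n + 1))) (closure (s n)) := by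
  choose F hFm hFinf hFA hFs using fun n (E : {E : Set X // MeasurableSet E ∧ E.Infinite}) =>
    exists_ssubset_disjoint_closure (hs n) E.2.1 E.2.2
  let D : ℕ → {E : Set X // MeasurableSet E ∧ E.Infinite} :=
    fun n => Nat.rec ⟨A, hA, hAinf⟩ (fun n E => ⟨F n E, hFm n E, hFinf n E⟩) n
  exact ⟨fun n => (D n).1, strictAnti_nat_of_succ_lt fun n => hFA n (D n), rfl,
    fun n => (D n).2.1, fun n => hFs n (D n)⟩

theorem isNowhereDense_iUnion {s : ℕ → Set (Remainder X)} (hs : ∀ n, IsNowhereDense (s n)) :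
    IsNowhereDense (⋃ n, s n) := by
  refine eq_empty_iff_forall_notMem.2 fun q hq => ?_
  obtain ⟨A₀, hA₀, hqA₀, hA₀s⟩ := exists_hatSet_subset isOpen_interior hq
  obtain ⟨A, hA, rfl, hAm, hAs⟩ :=
    exists_strictAnti_disjoint_closure hs hA₀ (q.infinite_of_mem hqA₀)
  obtain ⟨B, hBc, hBinf, hBA₀, hBA⟩ := exists_countable_infinite_diff_finite_of_strictAnti hA
  have hBm : MeasurableSet B := hBc.measurableSet
  have hBs : Disjoint ((↑) ⁻¹' hatSet B) (⋃ n, s n) := disjoint_iUnion_right.2 fun n =>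
    ((hAs n).mono_left (preimage_hatSet_subset_of_diff_finite (hAm _) (hBA _))).mono_right
      subset_closure
  have hBcl : (↑) ⁻¹' hatSet B ⊆ closure (⋃ n, s n) :=
    (preimage_hatSet_subset_of_diff_finite hA₀ (by simp [sdiff_eq_empty.2 hBA₀])).trans
      (hA₀s.trans interior_subset)
  obtain ⟨r, hr⟩ := preimage_hatSet_nonempty hBm hBinf
  exact disjoint_left.1 (hBs.closure_right (isOpen_preimage_hatSet hBm)) hr (hBcl hr)

end Remainder

theorem stmt16_general {X : Type*} [MeasurableSpace X]
    (hfin : ∀ F : Set X, F.Finite → MeasurableSet F)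
    (f : ℕ → Set ↥((Set.range (princ : X → MUltra X))ᶜ))
    (hf : ∀ n, interior (closure (f n)) = ∅) :
    interior (closure (⋃ n, f n)) = ∅ := by
  have : MeasurableSingletonClass X := ⟨fun x => hfin {x} (finite_singleton x)⟩
  exact Remainder.isNowhereDense_iUnion hf

theorem stmt16 {X : Type*} [MeasurableSpace X] [Infinite X]
    (hfin : ∀ F : Set X, F.Finite → MeasurableSet F)
    (f : ℕ → Set ↥((Set.range (princ : X → MUltra X))ᶜ))
    (hf : ∀ n, interior (closure (f n)) = ∅) :
    interior (closure (⋃ n, f n)) = ∅ :=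
  stmt16_general hfin f hf
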